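/- arXiv:1307.0738 — 2 statements merged into one kernel-verified Lean document; each statement's English description precedes it below -/
import Mathlib

section
/- Let ⟨τ⟩ be a cyclic group of order n > 1 acting on the rational function field L(v₁,…,v_{n−1}) over a field L containing a primitive n-th root of unity ξ, by τ : v₁ ↦ v₂ ↦ ⋯ ↦ v_{n−1} ↦ (v₁⋯v_{n−1})⁻¹. Then there exist s₁,…,s_{n−1} with L(v₁,…,v_{n−1}) = L(s₁,…,s_{n−1}) and τ(sᵢ) = ξⁱ sᵢ for 1 ≤ i ≤ n−1. -/
open Finset

theorem stmt_16 (L : Type*) [Field L] (n : ℕ) (hn : 1 < n) (ξ : L)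
    (hξ : IsPrimitiveRoot ξ n)
    (F : Type*) [Field F] [Algebra (MvPolynomial (Fin (n - 1)) L) F]
    [IsFractionRing (MvPolynomial (Fin (n - 1)) L) F] [Algebra L F]
    [IsScalarTower L (MvPolynomial (Fin (n - 1)) L) F]
    (v : Fin (n - 1) → F)
    (hv : ∀ i, v i = algebraMap (MvPolynomial (Fin (n - 1)) L) F (MvPolynomial.X i))
    (τ : F ≃ₐ[L] F)
    (hτ : ∀ i : Fin (n - 1), τ (v i) =
      if h : (i : ℕ) + 1 < n - 1 then v ⟨(i : ℕ) + 1, h⟩ else (∏ j, v j)⁻¹) :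
    ∃ s : Fin (n - 1) → F,
      IntermediateField.adjoin L (Set.range s) = (⊤ : IntermediateField L F) ∧
      ∀ i : Fin (n - 1), τ (s i) = algebraMap L F (ξ ^ ((i : ℕ) + 1)) * s i := by
  classical
  have hNe : NeZero n := ⟨by omega⟩
  have hnL : ((n : ℕ) : L) ≠ 0 := hξ.neZero'.out
  set aL := algebraMap L F with haL
  have hinj : Function.Injective (algebraMap (MvPolynomial (Fin (n - 1)) L) F) :=
    IsFractionRing.injective _ _
  have hnF : (n : F) ≠ 0 := by
    rw [← map_natCast aL n]
    exact fun h => hnL ((algebraMap L F).injective (by rw [map_zero]; exact h))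
  -- basic facts about ξ
  have hξn : ξ ^ n = 1 := hξ.pow_eq_one
  have hξmod : ∀ a : ℕ, ξ ^ (a % n) = ξ ^ a := by
    intro a
    conv_rhs => rw [← Nat.div_add_mod a n]
    rw [pow_add, pow_mul, hξn, one_pow, one_mul]
  have hcong : ∀ a b : ℕ, a % n = b % n → ξ ^ a = ξ ^ b := by
    intro a b hab
    rw [← hξmod a, ← hξmod b, hab]
  have hgeom : ∀ e : ℕ, (∑ j ∈ range n, (ξ ^ e) ^ j) = if n ∣ e then (n : L) else 0 := by
    intro e
    split_ifs with h
    · rw [(hξ.pow_eq_one_iff_dvd e).2 h]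
      simp
    · have hne : ξ ^ e ≠ 1 := fun hh => h ((hξ.pow_eq_one_iff_dvd e).1 hh)
      have hpow : (ξ ^ e) ^ n = 1 := by rw [← pow_mul, mul_comm, pow_mul, hξn, one_pow]
      have h3 := geom_sum_mul (ξ ^ e) n
      rw [hpow, sub_self] at h3
      rcases mul_eq_zero.1 h3 with h4 | h4
      · exact h4
      · exact absurd (sub_eq_zero.1 h4) hne
  have hdvd : ∀ k mm : ℕ, k < n → mm < n → (n ∣ (n - 1) * k + mm ↔ mm = k) := by
    intro k mm hk hmm
    have h1 : (n - 1) * k + k = n * k := by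
      have h0 : (n - 1) + 1 = n := by omega
      calc (n - 1) * k + k = ((n - 1) + 1) * k := by ring
        _ = n * k := by rw [h0]
    constructor
    · rintro ⟨c, hc⟩
      have h2 : mm + n * k = n * c + k := by omega
      have h3 : mm % n = k % n := by
        have e3 : (mm + n * k) % n = mm % n := Nat.add_mul_mod_self_left mm n k
        have e4 : (n * c + k) % n = k % n := Nat.mul_add_mod n c k
        rw [← e3, h2, e4]
      rwa [Nat.mod_eq_of_lt hmm, Nat.mod_eq_of_lt hk] at h3
    · rintro rfl
      exact ⟨mm, h1⟩
  -- the cyclic tuple w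
  set w : ℕ → F := fun k => if h : k < n - 1 then v ⟨k, h⟩ else (∏ j, v j)⁻¹ with hw
  have hv0 : ∀ i, v i ≠ 0 := by
    intro i h
    rw [hv i] at h
    exact MvPolynomial.X_ne_zero i (hinj (by rw [map_zero]; exact h))
  have hprodv : (∏ j : Fin (n - 1), v j) ≠ 0 := prod_ne_zero_iff.2 fun j _ => hv0 j
  have hw0 : ∀ k, w k ≠ 0 := by
    intro k
    by_cases h : k < n - 1
    · simpa [hw, h] using hv0 ⟨k, h⟩
    · simpa [hw, h] using inv_ne_zero hprodv
  set P : ℕ → F := fun k => ∏ j ∈ range k, w j with hP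
  have hP0 : ∀ k, P k ≠ 0 := fun k => prod_ne_zero_iff.2 fun j _ => hw0 j
  have hPzero : P 0 = 1 := by simp [hP]
  have hPsucc : ∀ k, P (k + 1) = P k * w k := fun k => Finset.prod_range_succ w k
  have hwrange : ∏ j ∈ range (n - 1), w j = ∏ i : Fin (n - 1), v i := by
    rw [← Fin.prod_univ_eq_prod_range]
    exact Finset.prod_congr rfl fun i _ => by simp [hw, i.isLt]
  have hprodw : P n = 1 := by
    have h1 : P n = P (n - 1) * w (n - 1) := by
      rw [← hPsucc]
      congr 1
      omega
    have h2 : w (n - 1) = (∏ j : Fin (n - 1), v j)⁻¹ := by simp [hw]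
    rw [h1, h2]
    have : P (n - 1) = ∏ i : Fin (n - 1), v i := by
      simp only [hP]
      exact hwrange
    rw [this, mul_inv_cancel₀ hprodv]
  -- action of τ on w
  have hτw : ∀ k, k < n - 1 → τ (w k) = w (k + 1) := by
    intro k hk
    have h1 : w k = v ⟨k, hk⟩ := by simp [hw, hk]
    rw [h1, hτ]
  -- action of τ on P
  have hτPk : ∀ k, k < n → τ (P k) * w 0 = P ((k + 1) % n) := by
    intro k hk
    have h1 : τ (P k) = ∏ j ∈ range k, w (j + 1) := by
      simp only [hP]
      rw [map_prod]
      exact Finset.prod_congr rfl fun j hj => hτw j (by have := Finset.mem_range.1 hj; omega)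
    have h2 : τ (P k) * w 0 = P (k + 1) := by
      rw [h1]
      simp only [hP]
      exact (Finset.prod_range_succ' w k).symm
    rcases Nat.lt_or_ge k (n - 1) with h | h
    · rw [Nat.mod_eq_of_lt (show k + 1 < n by omega)]
      exact h2
    · have hk1 : k + 1 = n := by omega
      rw [h2, hk1, hprodw, Nat.mod_self, hPzero]
  -- the resolvents u
  set u : ℕ → F := fun j => ∑ k ∈ range n, aL (ξ ^ (j * k)) * (P k)⁻¹ with hu
  have hτu : ∀ j, τ (u j) = aL (ξ ^ (j * (n - 1))) * w 0 * u j := by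
    intro j
    have hstep : ∀ k, k < n → τ (aL (ξ ^ (j * k)) * (P k)⁻¹)
        = w 0 * (aL (ξ ^ (j * k)) * (P ((k + 1) % n))⁻¹) := by
      intro k hk
      rw [map_mul, map_inv₀, τ.commutes]
      have h2 : τ (P k) = P ((k + 1) % n) * (w 0)⁻¹ :=
        (eq_mul_inv_iff_mul_eq₀ (hw0 0)).2 (hτPk k hk)
      rw [h2, mul_inv, inv_inv]
      ring
    have hre : ∑ k ∈ range n, aL (ξ ^ (j * k)) * (P ((k + 1) % n))⁻¹
        = ∑ k ∈ range n, aL (ξ ^ (j * (n - 1)) * ξ ^ (j * k)) * (P k)⁻¹ := by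
      refine Finset.sum_nbij' (fun k => (k + 1) % n) (fun k => (k + (n - 1)) % n)
        ?_ ?_ ?_ ?_ ?_
      · intro a _
        exact Finset.mem_range.2 (Nat.mod_lt _ (by omega))
      · intro a _
        exact Finset.mem_range.2 (Nat.mod_lt _ (by omega))
      · intro a ha
        have ha' := Finset.mem_range.1 ha
        show ((a + 1) % n + (n - 1)) % n = a
        rcases Nat.lt_or_ge (a + 1) n with h | h
        · rw [Nat.mod_eq_of_lt h]
          have : a + 1 + (n - 1) = a + n := by omega
          rw [this, Nat.add_mod_right, Nat.mod_eq_of_lt ha']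
        · have h1 : a + 1 = n := by omega
          rw [h1, Nat.mod_self, zero_add, Nat.mod_eq_of_lt (by omega)]
          omega
      · intro a ha
        have ha' := Finset.mem_range.1 ha
        show ((a + (n - 1)) % n + 1) % n = a
        rcases Nat.eq_zero_or_pos a with rfl | h
        · rw [zero_add, Nat.mod_eq_of_lt (show n - 1 < n by omega)]
          have : n - 1 + 1 = n := by omega
          rw [this, Nat.mod_self]
        · have h1 : a + (n - 1) = n + (a - 1) := by omega
          rw [h1, Nat.add_mod_left, Nat.mod_eq_of_lt (show a - 1 < n by omega)]
          have : a - 1 + 1 = a := by omega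
          rw [this, Nat.mod_eq_of_lt ha']
      · intro a ha
        have ha' := Finset.mem_range.1 ha
        show aL (ξ ^ (j * a)) * (P ((a + 1) % n))⁻¹
            = aL (ξ ^ (j * (n - 1)) * ξ ^ (j * ((a + 1) % n))) * (P ((a + 1) % n))⁻¹
        rw [← pow_add]
        have hcc : (j * a) % n = (j * (n - 1) + j * ((a + 1) % n)) % n := by
          have e1 : (j * (n - 1) + j * ((a + 1) % n)) % n
              = (j * (n - 1) + j * (a + 1)) % n :=
            Nat.ModEq.add_left _ (Nat.ModEq.mul_left j (Nat.mod_modEq (a + 1) n))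
          have e2 : j * (n - 1) + j * (a + 1) = j * a + j * n := by
            have h5 : (n - 1) + (a + 1) = a + n := by omega
            rw [← Nat.mul_add, h5, Nat.mul_add]
          have e3 : (j * a + j * n) % n = (j * a) % n := Nat.add_mul_mod_self_right (j * a) j n
          calc (j * a) % n = (j * a + j * n) % n := e3.symm
            _ = (j * (n - 1) + j * (a + 1)) % n := by rw [← e2]
            _ = (j * (n - 1) + j * ((a + 1) % n)) % n := e1.symm
        rw [hcong _ _ hcc]
    calc τ (u j) = ∑ k ∈ range n, τ (aL (ξ ^ (j * k)) * (P k)⁻¹) := by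
          simp only [hu]; exact map_sum τ _ _
      _ = ∑ k ∈ range n, w 0 * (aL (ξ ^ (j * k)) * (P ((k + 1) % n))⁻¹) :=
          Finset.sum_congr rfl fun k hk => hstep k (Finset.mem_range.1 hk)
      _ = w 0 * ∑ k ∈ range n, aL (ξ ^ (j * k)) * (P ((k + 1) % n))⁻¹ :=
          (Finset.mul_sum _ _ _).symm
      _ = w 0 * ∑ k ∈ range n, aL (ξ ^ (j * (n - 1)) * ξ ^ (j * k)) * (P k)⁻¹ := by rw [hre]
      _ = aL (ξ ^ (j * (n - 1))) * w 0 * u j := by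
          simp only [hu, map_mul, Finset.mul_sum]
          exact Finset.sum_congr rfl fun k _ => by ring
  -- Fourier inversion
  have hS2 : ∀ k, k < n →
      ∑ j ∈ range n, aL (ξ ^ ((n - 1) * k * j)) * u j = (n : F) * (P k)⁻¹ := by
    intro k hk
    have h1 : ∀ j : ℕ, aL (ξ ^ ((n - 1) * k * j)) * u j
        = ∑ mm ∈ range n, aL ((ξ ^ ((n - 1) * k + mm)) ^ j) * (P mm)⁻¹ := by
      intro j
      simp only [hu]
      rw [Finset.mul_sum]
      refine Finset.sum_congr rfl fun mm _ => ?_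
      rw [← pow_mul, ← mul_assoc, ← map_mul, ← pow_add]
      have : (n - 1) * k * j + j * mm = ((n - 1) * k + mm) * j := by ring
      rw [this]
    calc ∑ j ∈ range n, aL (ξ ^ ((n - 1) * k * j)) * u j
        = ∑ j ∈ range n, ∑ mm ∈ range n, aL ((ξ ^ ((n - 1) * k + mm)) ^ j) * (P mm)⁻¹ :=
          Finset.sum_congr rfl fun j _ => h1 j
      _ = ∑ mm ∈ range n, ∑ j ∈ range n, aL ((ξ ^ ((n - 1) * k + mm)) ^ j) * (P mm)⁻¹ :=
          Finset.sum_comm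
      _ = ∑ mm ∈ range n, aL (∑ j ∈ range n, (ξ ^ ((n - 1) * k + mm)) ^ j) * (P mm)⁻¹ := by
          refine Finset.sum_congr rfl fun mm _ => ?_
          rw [← Finset.sum_mul, ← map_sum]
      _ = (n : F) * (P k)⁻¹ := ?_
    rw [Finset.sum_eq_single_of_mem k (Finset.mem_range.2 hk)]
    · rw [hgeom, if_pos ((hdvd k k hk hk).2 rfl), map_natCast]
    · intro mm hmm hne
      rw [hgeom, if_neg (fun hd => hne ((hdvd k mm hk (Finset.mem_range.1 hmm)).1 hd)),
        map_zero, zero_mul]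
  have hsum : ∑ j ∈ range n, u j = (n : F) := by
    have h := hS2 0 (by omega)
    simp only [Nat.mul_zero, Nat.zero_mul, pow_zero, map_one, one_mul, hPzero, inv_one,
      mul_one] at h
    exact h
  -- nonvanishing of u 0
  set wp : ℕ → MvPolynomial (Fin (n - 1)) L := fun k =>
    if h : k < n - 1 then MvPolynomial.X ⟨k, h⟩ else 1 with hwp
  have hPq : ∀ k, k < n →
      (P k)⁻¹ * P (n - 1) = algebraMap (MvPolynomial (Fin (n - 1)) L) F
        (∏ j ∈ Finset.Ico k (n - 1), wp j) := by
    intro k hk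
    have h1 : P k * ∏ j ∈ Finset.Ico k (n - 1), w j = P (n - 1) := by
      simp only [hP, Finset.range_eq_Ico]
      exact Finset.prod_Ico_consecutive w (Nat.zero_le k) (by omega)
    have h2 : (P k)⁻¹ * P (n - 1) = ∏ j ∈ Finset.Ico k (n - 1), w j := by
      rw [← h1, inv_mul_cancel_left₀ (hP0 k)]
    rw [h2, map_prod]
    refine Finset.prod_congr rfl fun j hj => ?_
    have hj' : j < n - 1 := (Finset.mem_Ico.1 hj).2
    simp only [hw, hwp, dif_pos hj']
    exact (hv ⟨j, hj'⟩)
  have hu00 : u 0 ≠ 0 := by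
    have hQc : MvPolynomial.constantCoeff
        (∑ k ∈ range n, ∏ j ∈ Finset.Ico k (n - 1), wp j) = 1 := by
      rw [map_sum]
      rw [Finset.sum_eq_single_of_mem (n - 1) (Finset.mem_range.2 (by omega))]
      · rw [Finset.Ico_self, Finset.prod_empty, map_one]
      · intro k hk hkn1
        have hklt : k < n - 1 := by
          have := Finset.mem_range.1 hk
          omega
        rw [map_prod]
        refine Finset.prod_eq_zero (Finset.mem_Ico.2 ⟨le_refl k, hklt⟩) ?_
        simp [hwp, hklt]
    have hQ0 : (∑ k ∈ range n, ∏ j ∈ Finset.Ico k (n - 1), wp j) ≠ 0 := by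
      intro h
      rw [h, map_zero] at hQc
      exact zero_ne_one hQc
    have hu0Q : u 0 * P (n - 1) = algebraMap (MvPolynomial (Fin (n - 1)) L) F
        (∑ k ∈ range n, ∏ j ∈ Finset.Ico k (n - 1), wp j) := by
      simp only [hu, Nat.zero_mul, pow_zero, map_one, one_mul]
      rw [Finset.sum_mul, map_sum]
      exact Finset.sum_congr rfl fun k hk => hPq k (Finset.mem_range.1 hk)
    intro h
    rw [h, zero_mul] at hu0Q
    exact hQ0 (hinj (by rw [map_zero]; exact hu0Q.symm))
  -- the construction
  set s : Fin (n - 1) → F := fun i => u (n - 1 - (i : ℕ)) / u 0 with hs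
  refine ⟨s, ?_, ?_⟩
  · -- generation
    set E := IntermediateField.adjoin L (Set.range s) with hE
    have hsE : ∀ i, s i ∈ E := fun i => IntermediateField.subset_adjoin L _ ⟨i, rfl⟩
    have hTsum : u 0 * (1 + ∑ i : Fin (n - 1), s i) = (n : F) := by
      rw [mul_add, mul_one, Finset.mul_sum]
      have h1 : ∀ i : Fin (n - 1), u 0 * s i = u (n - 1 - (i : ℕ)) := by
        intro i
        simp only [hs]
        rw [mul_comm, div_mul_cancel₀ _ hu00]
      rw [Finset.sum_congr rfl fun i _ => h1 i]
      rw [← hsum]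
      have h2 : ∑ i : Fin (n - 1), u (n - 1 - (i : ℕ)) = ∑ k ∈ range (n - 1), u (n - 1 - k) :=
        Fin.sum_univ_eq_sum_range (fun k => u (n - 1 - k)) (n - 1)
      have h3 : ∑ k ∈ range (n - 1), u (n - 1 - k) = ∑ k ∈ range (n - 1), u (k + 1) := by
        rw [← Finset.sum_range_reflect (fun k => u (k + 1)) (n - 1)]
        refine Finset.sum_congr rfl fun j hj => ?_
        have := Finset.mem_range.1 hj
        congr 1
        omega
      rw [h2, h3]
      have h4 := Finset.sum_range_succ' u (n - 1)
      have h5 : (n - 1) + 1 = n := by omega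
      rw [h5] at h4
      rw [h4]
      ring
    have hT0 : (1 + ∑ i : Fin (n - 1), s i) ≠ 0 := by
      intro h
      rw [h, mul_zero] at hTsum
      exact hnF hTsum.symm
    have hu0E : u 0 ∈ E := by
      have h1 : u 0 = (n : F) * (1 + ∑ i : Fin (n - 1), s i)⁻¹ := by
        rw [eq_mul_inv_iff_mul_eq₀ hT0]
        exact hTsum
      rw [h1]
      exact mul_mem (IntermediateField.natCast_mem E n)
        (inv_mem (add_mem (one_mem E) (sum_mem fun i _ => hsE i)))
    have huE : ∀ j, j < n → u j ∈ E := by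
      intro j hj
      rcases Nat.eq_zero_or_pos j with rfl | hj0
      · exact hu0E
      · have hi : n - 1 - j < n - 1 := by omega
        have hji : n - 1 - (n - 1 - j) = j := by omega
        have h1 : u j = s ⟨n - 1 - j, hi⟩ * u 0 := by
          show u j = u (n - 1 - (n - 1 - j)) / u 0 * u 0
          rw [hji, div_mul_cancel₀ _ hu00]
        rw [h1]
        exact mul_mem (hsE _) hu0E
    have hPinvE : ∀ k, k < n → (P k)⁻¹ ∈ E := by
      intro k hk
      have h1 : (P k)⁻¹ = (n : F)⁻¹ * ∑ j ∈ range n, aL (ξ ^ ((n - 1) * k * j)) * u j := by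
        rw [hS2 k hk, inv_mul_cancel_left₀ hnF]
      rw [h1]
      exact mul_mem (inv_mem (IntermediateField.natCast_mem E n))
        (sum_mem fun j hj => mul_mem (E.algebraMap_mem _) (huE j (Finset.mem_range.1 hj)))
    have hvE : ∀ i : Fin (n - 1), v i ∈ E := by
      intro i
      have hilt := i.isLt
      have hiw : v i = w (i : ℕ) := by simp [hw, hilt]
      have hwP : w (i : ℕ) = ((P ((i : ℕ) + 1))⁻¹)⁻¹ * (P (i : ℕ))⁻¹ := by
        rw [inv_inv, hPsucc]
        rw [mul_comm (P (i : ℕ)) (w (i : ℕ)), mul_assoc, mul_inv_cancel₀ (hP0 _), mul_one]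
      rw [hiw, hwP]
      exact mul_mem (inv_mem (hPinvE _ (by omega))) (hPinvE _ (by omega))
    rw [eq_top_iff]
    intro x _
    obtain ⟨f, g, hg, rfl⟩ := IsFractionRing.div_surjective
      (A := MvPolynomial (Fin (n - 1)) L) x
    have hpoly : ∀ q : MvPolynomial (Fin (n - 1)) L,
        algebraMap (MvPolynomial (Fin (n - 1)) L) F q ∈ E := by
      intro q
      induction q using MvPolynomial.induction_on with
      | C a =>
        rw [← MvPolynomial.algebraMap_eq, ← IsScalarTower.algebraMap_apply]
        exact E.algebraMap_mem a
      | add p q hp hq =>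
        rw [map_add]
        exact add_mem hp hq
      | mul_X p i hp =>
        rw [map_mul]
        refine mul_mem hp ?_
        rw [← hv i]
        exact hvE i
    exact div_mem (hpoly f) (hpoly g)
  · -- equivariance
    intro i
    have hilt := i.isLt
    have hcoef : ξ ^ ((n - 1 - (i : ℕ)) * (n - 1)) = ξ ^ ((i : ℕ) + 1) := by
      have hexp : (n - 1 - (i : ℕ)) * (n - 1) = n * (n - 2 - (i : ℕ)) + ((i : ℕ) + 1) := by
        zify [show (i : ℕ) ≤ n - 1 by omega, show (i : ℕ) ≤ n - 2 by omega,
          show 1 ≤ n by omega, show 2 ≤ n by omega]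
        ring
      rw [hexp, pow_add, pow_mul, hξn, one_pow, one_mul]
    show τ (u (n - 1 - (i : ℕ)) / u 0) = aL (ξ ^ ((i : ℕ) + 1)) * (u (n - 1 - (i : ℕ)) / u 0)
    rw [map_div₀, hτu, hτu, hcoef]
    rw [show (0 : ℕ) * (n - 1) = 0 from Nat.zero_mul _, pow_zero, map_one, one_mul]
    rw [mul_assoc, mul_div_assoc, mul_div_mul_left _ _ (hw0 0)]
end

section
/- Let G act on L(x), the rational function field of one variable over a field L, such that for each σ ∈ G, σ(L) ⊆ L and σ(x) = a_σ x + b_σ with a_σ ∈ L×, b_σ ∈ L. Then L(x)^G = L^G(z) for some z ∈ L[x]; in particular L(x)^G is a purely transcendental extension of degree 1 over L^G. -/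
/-!
The action maps `L` into `L` and `X` to `a_σ X + b_σ`, so it preserves `L[X]` and degrees.
Let `w` be an invariant polynomial of least positive degree (the norm `∏ σ(X)` shows there is
one). Division with remainder by `w` preserves invariance, and an invariant remainder of degree
`< deg w` is a constant, so by induction on the degree every invariant polynomial is a
polynomial in `w` over `L^G`. Finally, an invariant rational function `f` is a quotient of
invariant polynomials: its denominator times its conjugates is the norm `∏ σ(denom f)`.
-/

open Polynomial

theorem Polynomial.map_mod_eq_and_map_div_eq {K : Type*} [Field K] (f : K[X] →+* K[X])
    (hf : ∀ q, (f q).degree = q.degree) {p w : K[X]} (hp : f p = p) (hw : f w = w) :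
    f (p % w) = p % w ∧ f (p / w) = p / w := by
  rcases eq_or_ne w 0 with rfl | hw0
  · simp [hp]
  have hdiv := EuclideanDomain.div_add_mod p w
  have hfdiv : w * f (p / w) + f (p % w) = p := by
    simpa only [map_add, map_mul, hw, hp] using congrArg f hdiv
  have hmod : f (p % w) = p % w := calc
    f (p % w) = f (p % w) % w :=
      ((mod_eq_self_iff hw0).mpr (by rw [hf]; exact degree_mod_lt p hw0)).symm
    _ = p % w := mod_eq_of_dvd_sub ⟨-f (p / w), by linear_combination hfdiv⟩
  exact ⟨hmod, mul_left_cancel₀ hw0 (by linear_combination hfdiv - hdiv - hmod)⟩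

namespace RatFuncAffineAction

variable {L : Type*} [Field L] {G : Type*} [Group G] [MulSemiringAction G (RatFunc L)]

local notation "ι" => algebraMap L[X] (RatFunc L)
local notation "F" => FixedPoints.subfield G (RatFunc L)

variable (hL : ∀ (σ : G) (c : L), ∃ c' : L, σ • (RatFunc.C c : RatFunc L) = RatFunc.C c')
  (hX : ∀ σ : G, ∃ a b : L, a ≠ 0 ∧
    σ • (RatFunc.X : RatFunc L) = RatFunc.C a * RatFunc.X + RatFunc.C b)

noncomputable def coeffHom (σ : G) : L →+* L where
  toFun c := (hL σ c).choose
  map_one' := RatFunc.C_injective <| by rw [← (hL σ 1).choose_spec, map_one, smul_one]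
  map_mul' x y := RatFunc.C_injective <| by
    rw [← (hL σ (x * y)).choose_spec, map_mul, map_mul, ← (hL σ x).choose_spec,
      ← (hL σ y).choose_spec, smul_mul']
  map_zero' := RatFunc.C_injective <| by rw [← (hL σ 0).choose_spec, map_zero, smul_zero]
  map_add' x y := RatFunc.C_injective <| by
    rw [← (hL σ (x + y)).choose_spec, map_add, map_add, ← (hL σ x).choose_spec,
      ← (hL σ y).choose_spec, smul_add]

theorem C_coeffHom (σ : G) (c : L) : RatFunc.C (coeffHom hL σ c) = σ • RatFunc.C c :=
  (hL σ c).choose_spec.symm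

noncomputable def imageX (σ : G) : L[X] :=
  C (hX σ).choose * X + C (hX σ).choose_spec.choose

theorem natDegree_imageX (σ : G) : (imageX hX σ).natDegree = 1 :=
  natDegree_linear (hX σ).choose_spec.choose_spec.1

theorem algebraMap_imageX (σ : G) : ι (imageX hX σ) = σ • RatFunc.X := by
  rw [imageX, map_add, map_mul, RatFunc.algebraMap_C, RatFunc.algebraMap_C, RatFunc.algebraMap_X]
  exact (hX σ).choose_spec.choose_spec.2.symm

noncomputable def polyHom (σ : G) : L[X] →+* L[X] :=
  eval₂RingHom (C.comp (coeffHom hL σ)) (imageX hX σ)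

theorem algebraMap_polyHom (σ : G) (p : L[X]) : ι (polyHom hL hX σ p) = σ • ι p := by
  have : (algebraMap L[X] (RatFunc L)).comp (polyHom hL hX σ) =
      (MulSemiringAction.toRingHom G (RatFunc L) σ).comp ι := by
    refine ringHom_ext (fun c => ?_) ?_
    · simp [polyHom, C_coeffHom]
    · simp [polyHom, algebraMap_imageX]
  exact RingHom.congr_fun this p

theorem polyHom_injective (σ : G) : Function.Injective (polyHom hL hX σ) := fun p q h => by
  have := congrArg ι h
  rwa [algebraMap_polyHom, algebraMap_polyHom, smul_left_cancel_iff,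
    (IsFractionRing.injective L[X] (RatFunc L)).eq_iff] at this

theorem degree_polyHom (σ : G) (p : L[X]) : (polyHom hL hX σ p).degree = p.degree := by
  rcases eq_or_ne p 0 with rfl | hp
  · simp
  have hφp : polyHom hL hX σ p ≠ 0 := (map_ne_zero_iff _ (polyHom_injective hL hX σ)).mpr hp
  have hcomp : polyHom hL hX σ p = (p.map (coeffHom hL σ)).comp (imageX hX σ) := by
    rw [comp, eval₂_map]; rfl
  rw [degree_eq_natDegree hp, degree_eq_natDegree hφp, hcomp, natDegree_comp, natDegree_map,
    natDegree_imageX, mul_one]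

theorem algebraMap_mem_fixedPoints_iff (p : L[X]) :
    ι p ∈ F ↔ ∀ σ, polyHom hL hX σ p = p := by
  change (∀ σ : G, σ • ι p = ι p) ↔ _
  simp only [← algebraMap_polyHom hL hX, (IsFractionRing.injective L[X] (RatFunc L)).eq_iff]

theorem natDegree_polyHom (σ : G) (p : L[X]) : (polyHom hL hX σ p).natDegree = p.natDegree :=
  natDegree_eq_of_degree_eq (degree_polyHom hL hX σ p)

theorem polyHom_one_apply (p : L[X]) : polyHom hL hX 1 p = p :=
  IsFractionRing.injective L[X] (RatFunc L) (by rw [algebraMap_polyHom, one_smul])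

theorem algebraMap_prod_polyHom [Fintype G] (p : L[X]) :
    ι (∏ τ : G, polyHom hL hX τ p) = ∏ τ : G, τ • ι p := by
  simp only [map_prod, algebraMap_polyHom]

include hL hX

theorem exists_natDegree_pos_algebraMap_mem_fixedPoints [Finite G] :
    ∃ w : L[X], ι w ∈ F ∧ 0 < w.natDegree := by
  have := Fintype.ofFinite G
  refine ⟨∏ τ : G, polyHom hL hX τ X, fun σ => ?_, ?_⟩
  · rw [algebraMap_prod_polyHom, Finset.smul_prod_perm]
  · have hdeg (τ : G) : (polyHom hL hX τ X).natDegree = 1 := by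
      rw [natDegree_polyHom, natDegree_X]
    rw [natDegree_prod _ _ fun τ _ => ne_zero_of_natDegree_gt (hdeg τ).symm.le]
    simpa [hdeg] using Fintype.card_pos

theorem exists_eq_div_of_mem_fixedPoints [Finite G] {f : RatFunc L} (hf : f ∈ F) :
    ∃ P Q : L[X], ι P ∈ F ∧ ι Q ∈ F ∧ f = ι P / ι Q := by
  have := Fintype.ofFinite G
  set Q := ∏ τ : G, polyHom hL hX τ f.denom
  have hQF : ι Q ∈ F := fun σ => by rw [algebraMap_prod_polyHom, Finset.smul_prod_perm]
  have hd : ι f.denom ≠ 0 := RatFunc.algebraMap_ne_zero f.denom_ne_zero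
  have hQ0 : ι Q ≠ 0 := by
    rw [algebraMap_prod_polyHom, Finset.prod_ne_zero_iff]
    exact fun τ _ => (smul_ne_zero_iff_ne τ).mpr hd
  obtain ⟨R, hR⟩ : f.denom ∣ Q :=
    polyHom_one_apply hL hX f.denom ▸ Finset.dvd_prod_of_mem _ (Finset.mem_univ 1)
  have hPQ : ι (f.num * R) = f * ι Q := by
    rw [hR, map_mul, map_mul, ← mul_assoc, ← (div_eq_iff hd).mp f.num_div_denom]
  exact ⟨f.num * R, Q, hPQ ▸ mul_mem hf hQF, hQF, by rw [hPQ, mul_div_cancel_right₀ _ hQ0]⟩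

theorem algebraMap_mem_closure_of_minimal {w : L[X]} (hwF : ι w ∈ F) (hw : 0 < w.natDegree)
    (hmin : ∀ q : L[X], ι q ∈ F → 0 < q.natDegree → w.natDegree ≤ q.natDegree)
    {p : L[X]} (hp : ι p ∈ F) :
    ι p ∈ Subfield.closure ((Set.range RatFunc.C ∩ (F : Set (RatFunc L))) ∪ {ι w}) := by
  set K := Subfield.closure ((Set.range RatFunc.C ∩ (F : Set (RatFunc L))) ∪ {ι w})
  induction hn : p.natDegree using Nat.strong_induction_on generalizing p with
  | _ n ih =>
  have hdivmod (σ : G) := map_mod_eq_and_map_div_eq (polyHom hL hX σ) (degree_polyHom hL hX σ)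
    ((algebraMap_mem_fixedPoints_iff hL hX p).mp hp σ)
    ((algebraMap_mem_fixedPoints_iff hL hX w).mp hwF σ)
  have hmodF : ι (p % w) ∈ F :=
    (algebraMap_mem_fixedPoints_iff hL hX _).mpr fun σ => (hdivmod σ).1
  have hdivF : ι (p / w) ∈ F :=
    (algebraMap_mem_fixedPoints_iff hL hX _).mpr fun σ => (hdivmod σ).2
  have hmodK : ι (p % w) ∈ K := by
    have hconst : (p % w).natDegree = 0 := by
      by_contra h
      exact (natDegree_mod_lt p hw.ne').not_ge (hmin _ hmodF (Nat.pos_of_ne_zero h))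
    rw [eq_C_of_natDegree_eq_zero hconst, RatFunc.algebraMap_C] at hmodF ⊢
    exact Subfield.subset_closure (Or.inl ⟨Set.mem_range_self _, hmodF⟩)
  have hdivK : ι (p / w) ∈ K := by
    rcases eq_or_ne (p / w) 0 with h | h
    · rw [h, map_zero]
      exact zero_mem K
    have hp0 : p ≠ 0 := by
      rintro rfl
      exact h EuclideanDomain.zero_div
    have hlt := natDegree_lt_natDegree h (degree_div_lt hp0 (natDegree_pos_iff_degree_pos.mp hw))
    exact ih _ (hn ▸ hlt) hdivF rfl
  rw [← EuclideanDomain.div_add_mod p w, map_add, map_mul]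
  exact add_mem (mul_mem (Subfield.subset_closure (Or.inr rfl)) hdivK) hmodK

end RatFuncAffineAction

open RatFuncAffineAction in
theorem stmt_17 (L : Type*) [Field L] (G : Type*) [Group G] [Finite G]
    [MulSemiringAction G (RatFunc L)]
    (hL : ∀ (σ : G) (c : L), ∃ c' : L, σ • (RatFunc.C c : RatFunc L) = RatFunc.C c')
    (hX : ∀ σ : G, ∃ a b : L, a ≠ 0 ∧
      σ • (RatFunc.X : RatFunc L) = RatFunc.C a * RatFunc.X + RatFunc.C b) :
    ∃ q : Polynomial L,
      FixedPoints.subfield G (RatFunc L) =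
        Subfield.closure
          ((Set.range (RatFunc.C : L →+* RatFunc L) ∩
              (FixedPoints.subfield G (RatFunc L) : Set (RatFunc L))) ∪
            {algebraMap (Polynomial L) (RatFunc L) q}) := by
  set F := FixedPoints.subfield G (RatFunc L)
  obtain ⟨w, ⟨hwF, hw⟩, hmin⟩ := (measure natDegree).wf.has_min
    {q : L[X] | algebraMap L[X] (RatFunc L) q ∈ F ∧ 0 < q.natDegree}
    (exists_natDegree_pos_algebraMap_mem_fixedPoints hL hX)
  have hmin' (q : L[X]) (hqF : algebraMap L[X] (RatFunc L) q ∈ F) (hq : 0 < q.natDegree) :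
      w.natDegree ≤ q.natDegree :=
    not_lt.mp (hmin q ⟨hqF, hq⟩)
  refine ⟨w, le_antisymm (fun f hf => ?_) ?_⟩
  · obtain ⟨P, Q, hP, hQ, rfl⟩ := exists_eq_div_of_mem_fixedPoints hL hX hf
    exact div_mem (algebraMap_mem_closure_of_minimal hL hX hwF hw hmin' hP)
      (algebraMap_mem_closure_of_minimal hL hX hwF hw hmin' hQ)
  · rw [Subfield.closure_le]
    rintro y (⟨-, hy⟩ | rfl)
    exacts [hy, hwF]
end
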